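/- arXiv:1610.04993 — 2 statements merged into one kernel-verified Lean document; each statement's English description precedes it below -/
import Mathlib

section
/- Let G be a group containing elements g_1, ..., g_{n-1} satisfying the type A braid relations, and an element X_1 such that g_1 X_1 g_1 X_1 = X_1 g_1 X_1 g_1 and g_i X_1 = X_1 g_i for 2 ≤ i ≤ n-1. Define X_{i+1} := g_i X_i g_i for 1 ≤ i ≤ n-1. Then the elements X_1, ..., X_n pairwise commute. -/
lemma braid_key {G : Type*} [Group G] (a b x : G)
    (hab : a * b * a = b * a * b) (hbx : b * x = x * b)
    (hax : a * x * a * x = x * a * x * a) :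
    b * (a * x * a) * b * (a * x * a) = (a * x * a) * b * (a * x * a) * b := by
  simp only [mul_assoc] at hab hbx hax ⊢
  have hab' : ∀ t, a * (b * (a * t)) = b * (a * (b * t)) := by
    intro t; rw [show a*(b*(a*t)) = (a*(b*a))*t by group, hab]; group
  have hbx' : ∀ t, b * (x * t) = x * (b * t) := by
    intro t; rw [← mul_assoc, ← mul_assoc, hbx]
  have hax' : ∀ t, a * (x * (a * (x * t))) = x * (a * (x * (a * t))) := by
    intro t; rw [show a*(x*(a*(x*t))) = (a*(x*(a*x)))*t by group, hax]; group
  calc b * (a * (x * (a * (b * (a * (x * a))))))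
      = b * (a * (x * (b * (a * (b * (x * a)))))) :=
        congrArg (fun t => b * (a * (x * t))) (hab' (x * a))
    _ = b * (a * (b * (x * (a * (b * (x * a)))))) :=
        congrArg (fun t => b * (a * t)) ((hbx' _).symm)
    _ = b * (a * (b * (x * (a * (x * (b * a)))))) :=
        congrArg (fun t => b * (a * (b * (x * (a * t))))) (hbx' a)
    _ = a * (b * (a * (x * (a * (x * (b * a)))))) := (hab' _).symm
    _ = a * (b * (x * (a * (x * (a * (b * a)))))) :=
        congrArg (fun t => a * (b * t)) (hax' (b * a))
    _ = a * (x * (b * (a * (x * (a * (b * a)))))) :=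
        congrArg (fun t => a * t) (hbx' _)
    _ = a * (x * (b * (a * (x * (b * (a * b)))))) :=
        congrArg (fun t => a * (x * (b * (a * (x * t))))) hab
    _ = a * (x * (b * (a * (b * (x * (a * b)))))) :=
        congrArg (fun t => a * (x * (b * (a * t)))) ((hbx' _).symm)
    _ = a * (x * (a * (b * (a * (x * (a * b)))))) :=
        congrArg (fun t => a * (x * t)) ((hab' _).symm)

/-- In a group with `g 1, …, g (n-1)` satisfying the type `A` braid relations and `X 1`
satisfying `g_1 X_1 g_1 X_1 = X_1 g_1 X_1 g_1` and commuting with `g_2, …, g_{n-1}`,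
defining `X_{i+1} = g_i X_i g_i`, the elements `X_1, …, X_n` pairwise commute. -/
theorem stmt2 {G : Type*} [Group G] (n : ℕ) (g X : ℕ → G)
    (hbraid : ∀ i, 1 ≤ i → i ≤ n - 2 →
      g i * g (i+1) * g i = g (i+1) * g i * g (i+1))
    (hcomm : ∀ i j, 1 ≤ i → i + 2 ≤ j → j ≤ n - 1 → g i * g j = g j * g i)
    (hX1 : g 1 * X 1 * g 1 * X 1 = X 1 * g 1 * X 1 * g 1)
    (hXg : ∀ i, 2 ≤ i → i ≤ n - 1 → g i * X 1 = X 1 * g i)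
    (hXrec : ∀ i, 1 ≤ i → i ≤ n - 1 → X (i+1) = g i * X i * g i) :
    ∀ i j, 1 ≤ i → i ≤ n → 1 ≤ j → j ≤ n → X i * X j = X j * X i := by
  -- Lemma B: g j commutes with X i for i + 1 ≤ j ≤ n - 1
  have hB : ∀ i, 1 ≤ i → ∀ j, i + 1 ≤ j → j ≤ n - 1 → g j * X i = X i * g j := by
    intro i hi
    induction i, hi using Nat.le_induction with
    | base => intro j hj hj'; exact hXg j (by omega) hj'
    | succ i hi ih =>
      intro j hj hj'
      rw [hXrec i (by omega) (by omega)]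
      have h1 : g j * g i = g i * g j := (hcomm i j (by omega) (by omega) hj').symm
      have h2 : g j * X i = X i * g j := ih j (by omega) hj'
      calc g j * (g i * X i * g i) = g i * (g j * X i) * g i := by
            rw [show g j * (g i * X i * g i) = (g j * g i) * X i * g i by group, h1]; group
        _ = g i * X i * (g j * g i) := by rw [h2]; group
        _ = g i * X i * g i * g j := by rw [h1]; group
  -- Lemma A: braid-type relation for every X i
  have hA : ∀ i, 1 ≤ i → i ≤ n - 1 → g i * X i * g i * X i = X i * g i * X i * g i := by
    intro i hi
    induction i, hi using Nat.le_induction with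
    | base => intro _; exact hX1
    | succ i hi ih =>
      intro hle
      rw [hXrec i (by omega) (by omega)]
      exact braid_key (g i) (g (i+1)) (X i)
        (hbraid i (by omega) (by omega))
        (hB i (by omega) (i+1) (by omega) (by omega))
        (ih (by omega))
  -- Lemma C: X i commutes with X j for i < j
  have hC : ∀ i, 1 ≤ i → ∀ j, i < j → j ≤ n → X i * X j = X j * X i := by
    intro i hi j hij
    have hij' : i + 1 ≤ j := hij
    clear hij
    induction j, hij' using Nat.le_induction with
    | base =>
      intro hjn
      rw [hXrec i hi (by omega)]
      have h := hA i hi (by omega)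
      rw [show X i * (g i * X i * g i) = X i * g i * X i * g i by group, ← h]
    | succ j hij ih =>
      intro hjn
      · have hrec := hXrec j (by omega) (by omega)
        have h1 : g j * X i = X i * g j := hB i hi j hij (by omega)
        have h2 : X i * X j = X j * X i := ih (by omega)
        rw [hrec,
          show X i * (g j * X j * g j) = X i * g j * X j * g j by group, ← h1,
          show g j * X i * X j * g j = g j * (X i * X j) * g j by group, h2,
          show g j * (X j * X i) * g j = g j * X j * (X i * g j) by group, ← h1,
          show g j * X j * (g j * X i) = g j * X j * g j * X i by group]
  intro i j hi hin hj hjn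
  rcases lt_trichotomy i j with h | h | h
  · exact hC i hi j h hjn
  · rw [h]
  · exact (hC j hj i h hin).symm
end

section
/- Let G be a group with elements g_1, ..., g_{n-1} satisfying the type A braid relations and X_1 as above, and define X_{i+1} = g_i X_i g_i. Then g_i X_j = X_j g_i for all 1 ≤ i ≤ n-1 and 1 ≤ j ≤ n with j ≠ i and j ≠ i+1. -/
private lemma stmt3_aux_braid {G : Type*} [Group G] (a b x : G)
    (hb : a * b * a = b * a * b) (hc : b * x = x * b) :
    a * (b * (a * x * a) * b) = (b * (a * x * a) * b) * a := by
  calc a * (b * (a * x * a) * b) = (a * b * a) * x * (a * b) := by group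
    _ = (b * a * b) * x * (a * b) := by rw [hb]
    _ = b * a * (b * x) * (a * b) := by group
    _ = b * a * (x * b) * (a * b) := by rw [hc]
    _ = (b * a * x) * (b * a * b) := by group
    _ = (b * a * x) * (a * b * a) := by rw [hb]
    _ = (b * (a * x * a) * b) * a := by group

private lemma stmt3_aux_comm {G : Type*} [Group G] (a c x : G)
    (h1 : a * c = c * a) (h2 : a * x = x * a) :
    a * (c * x * c) = (c * x * c) * a := by
  calc a * (c * x * c) = (a * c) * x * c := by group
    _ = c * (a * x) * c := by rw [h1]; group
    _ = c * (x * a) * c := by rw [h2]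
    _ = c * x * (a * c) := by group
    _ = c * x * (c * a) := by rw [h1]
    _ = (c * x * c) * a := by group

/-- With `g 1, …, g (n-1)` satisfying the type `A` braid relations, `X 1` as in the
affine Yokonuma–Hecke presentation, and `X_{i+1} = g_i X_i g_i`, one has
`g_i X_j = X_j g_i` for all `1 ≤ i ≤ n-1` and `1 ≤ j ≤ n` with `j ≠ i, i+1`. -/
theorem stmt3 {G : Type*} [Group G] (n : ℕ) (g X : ℕ → G)
    (hbraid : ∀ i, 1 ≤ i → i ≤ n - 2 →
      g i * g (i+1) * g i = g (i+1) * g i * g (i+1))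
    (hcomm : ∀ i j, 1 ≤ i → i + 2 ≤ j → j ≤ n - 1 → g i * g j = g j * g i)
    (hX1 : g 1 * X 1 * g 1 * X 1 = X 1 * g 1 * X 1 * g 1)
    (hXg : ∀ i, 2 ≤ i → i ≤ n - 1 → g i * X 1 = X 1 * g i)
    (hXrec : ∀ i, 1 ≤ i → i ≤ n - 1 → X (i+1) = g i * X i * g i) :
    ∀ i j, 1 ≤ i → i ≤ n - 1 → 1 ≤ j → j ≤ n → j ≠ i → j ≠ i + 1 →
      g i * X j = X j * g i := by
  have H : ∀ j, j ≤ n → 1 ≤ j → ∀ i, 1 ≤ i → i ≤ n - 1 → j ≠ i → j ≠ i + 1 →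
      g i * X j = X j * g i := by
    intro j
    induction j using Nat.strong_induction_on with
    | _ j IH =>
      intro hjn hj i hi hin hji hji1
      match j, hj, hjn, hji, hji1, IH with
      | 1, hj, hjn, hji, hji1, IH =>
        exact hXg i (by omega) hin
      | (k+2), hj, hjn, hji, hji1, IH =>
        have hX : X (k+2) = g (k+1) * X (k+1) * g (k+1) :=
          hXrec (k+1) (by omega) (by omega)
        rw [hX]
        by_cases hik : i = k
        · subst hik
        -- braid case : j = i + 2
          have hXk : X (i+1) = g i * X i * g i := hXrec i hi (by omega)
          rw [hXk]
          exact stmt3_aux_braid _ _ _ (hbraid i hi (by omega))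
            (IH i (by omega) (by omega) (by omega) (i+1) (by omega)
              (by omega) (by omega) (by omega))
        · by_cases hlt : i < k
          · exact stmt3_aux_comm _ _ _ (hcomm i (k+1) hi (by omega) (by omega))
              (IH (k+1) (by omega) (by omega) (by omega) i hi hin (by omega) (by omega))
          · have hik3 : k + 3 ≤ i := by omega
            exact stmt3_aux_comm _ _ _
              ((hcomm (k+1) i (by omega) (by omega) hin).symm)
              (IH (k+1) (by omega) (by omega) (by omega) i hi hin (by omega) (by omega))
  intro i j hi hin hj hjn hji hji1
  exact H j hjn hj i hi hin hji hji1
end
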